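/- Fix radii 0 < R₁ < R₂ < R, path-loss exponent α > 0, reader transmit power P_T > 0, noise power 𝒩 > 0, and SINR threshold γ > 0. Suppose the two reflection coefficients satisfy 0 < ξ₂ ≤ 1, ξ₂ ≥ γ·𝒩·R^{2α}/P_T, and ξ₁ ≥ max{ξ₂, γ·(ξ₂ + 𝒩·R₂^{2α}/P_T)} with ξ₁ ≤ 1. Then for every r₁ ∈ [R₁, R₂] and every r₂ ∈ [R₂, R], both P_T·ξ₁·r₁^{−2α} / (P_T·ξ₂·r₂^{−2α} + 𝒩) ≥ γ and P_T·ξ₂·r₂^{−2α}/𝒩 ≥ γ hold; i.e., for the two-node pairing case both paired backscatter nodes are always successfully decoded. -/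

import Mathlib

/-!
The power `P_T ξ r^{-2α}` received from a node decreases with its distance `r`, so the
near node's SINR is smallest at `r₁ = r₂ = R₂` and the far node's SNR is smallest at
`r₂ = R`. Multiplied through by `P_T R₂^{-2α}` and `P_T R^{-2α}` respectively, the
conditions on `ξ₁` and `ξ₂` are exactly these two worst-case decoding conditions.
-/

noncomputable def receivedPower (PT ξ α r : ℝ) : ℝ := PT * ξ * r ^ (-(2 * α))

section

variable {PT ξ α : ℝ}

theorem receivedPower_pos (hPT : 0 < PT) (hξ : 0 < ξ) {r : ℝ} (hr : 0 < r) :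
    0 < receivedPower PT ξ α r := by
  unfold receivedPower
  positivity

theorem receivedPower_anti (hPT : 0 ≤ PT) (hξ : 0 ≤ ξ) (hα : 0 ≤ α) {r r' : ℝ}
    (hr : 0 < r) (hrr' : r ≤ r') : receivedPower PT ξ α r' ≤ receivedPower PT ξ α r := by
  unfold receivedPower
  have hexp : -(2 * α) ≤ 0 := by linarith
  exact mul_le_mul_of_nonneg_left (Real.rpow_le_rpow_of_nonpos hr hrr' hexp) (by positivity)

theorem le_receivedPower_iff (hPT : 0 < PT) {R : ℝ} (hR : 0 < R) (c : ℝ) :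
    c ≤ receivedPower PT ξ α R ↔ c * R ^ (2 * α) / PT ≤ ξ := by
  have hRα : 0 < R ^ (2 * α) := Real.rpow_pos_of_pos hR _
  rw [receivedPower, Real.rpow_neg hR.le, div_le_iff₀ hPT, ← le_div_iff₀ hRα]
  field_simp

theorem mul_add_le_receivedPower_iff (hPT : 0 < PT) {R : ℝ} (hR : 0 < R) (γ ξ' Noise : ℝ) :
    γ * (receivedPower PT ξ' α R + Noise) ≤ receivedPower PT ξ α R ↔
      γ * (ξ' + Noise * R ^ (2 * α) / PT) ≤ ξ := by
  have hcancel : R ^ (-(2 * α)) * R ^ (2 * α) = 1 := by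
    rw [← Real.rpow_add hR, neg_add_cancel, Real.rpow_zero]
  have hscale : γ * (receivedPower PT ξ' α R + Noise) * R ^ (2 * α) / PT =
      γ * (ξ' + Noise * R ^ (2 * α) / PT) := by
    rw [receivedPower]
    field_simp
    linear_combination γ * PT * ξ' * hcancel
  rw [le_receivedPower_iff hPT hR, hscale]

end

theorem backcom_two_node_always_decoded
    (R₁ R₂ R α PT Noise γ ξ₁ ξ₂ : ℝ)
    (h0 : 0 < R₁) (h2R : R₂ < R)
    (hα : 0 < α) (hPT : 0 < PT) (hNoise : 0 < Noise) (hγ : 0 < γ)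
    (hξ2pos : 0 < ξ₂)
    (hξ2lb : γ * Noise * R ^ (2 * α) / PT ≤ ξ₂)
    (hξ1lb : max ξ₂ (γ * (ξ₂ + Noise * R₂ ^ (2 * α) / PT)) ≤ ξ₁)
    (r₁ r₂ : ℝ) (hr₁ : r₁ ∈ Set.Icc R₁ R₂) (hr₂ : r₂ ∈ Set.Icc R₂ R) :
    γ ≤ PT * ξ₁ * r₁ ^ (-(2 * α)) / (PT * ξ₂ * r₂ ^ (-(2 * α)) + Noise) ∧
      γ ≤ PT * ξ₂ * r₂ ^ (-(2 * α)) / Noise := by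
  show γ ≤ receivedPower PT ξ₁ α r₁ / (receivedPower PT ξ₂ α r₂ + Noise) ∧
    γ ≤ receivedPower PT ξ₂ α r₂ / Noise
  obtain ⟨hr₁l, hr₁u⟩ := hr₁
  obtain ⟨hr₂l, hr₂u⟩ := hr₂
  have hr₁ : 0 < r₁ := h0.trans_le hr₁l
  have hR₂ : 0 < R₂ := hr₁.trans_le hr₁u
  have hξ₁ : 0 < ξ₁ := hξ2pos.trans_le ((le_max_left _ _).trans hξ1lb)
  have hnear : γ * (receivedPower PT ξ₂ α R₂ + Noise) ≤ receivedPower PT ξ₁ α R₂ :=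
    (mul_add_le_receivedPower_iff hPT hR₂ γ ξ₂ Noise).2 ((le_max_right _ _).trans hξ1lb)
  have hfar : γ * Noise ≤ receivedPower PT ξ₂ α R :=
    (le_receivedPower_iff hPT (hR₂.trans h2R) _).2 hξ2lb
  constructor
  · rw [le_div_iff₀ (add_pos (receivedPower_pos hPT hξ2pos (hR₂.trans_le hr₂l)) hNoise)]
    calc γ * (receivedPower PT ξ₂ α r₂ + Noise)
        ≤ γ * (receivedPower PT ξ₂ α R₂ + Noise) := by
          gcongr; exact receivedPower_anti hPT.le hξ2pos.le hα.le hR₂ hr₂l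
      _ ≤ receivedPower PT ξ₁ α R₂ := hnear
      _ ≤ receivedPower PT ξ₁ α r₁ := receivedPower_anti hPT.le hξ₁.le hα.le hr₁ hr₁u
  · rw [le_div_iff₀ hNoise]
    exact hfar.trans (receivedPower_anti hPT.le hξ2pos.le hα.le (hR₂.trans_le hr₂l) hr₂u)
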